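/- Let A be a commutative ring, f ∈ A a non-zero-divisor, Â = lim_n A/(f^n). Then for every A-module M, Tor_1^A(Â, (A_f/A) ⊗_A M) = 0. -/

import Mathlib

/-!
The completion `Â` behaves like `A` modulo powers of `f`: `f` is a non-zero-divisor on `Â`, and
for a module `N` killed by `fⁿ` the map `N → N ⊗ Â`, `m ↦ m ⊗ 1`, is bijective, with inverse
`m ⊗ x ↦ xₙ • m`. Hence if `F` is flat and `fⁿ F ⊆ L ⊆ F`, tensoring `F --fⁿ--> L → L/fⁿF → 0`
with `Â` shows that `L ⊗ Â → F ⊗ Â` is injective: `L/fⁿF ↪ F/fⁿF` stays injective and `fⁿ` is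
injective on `F ⊗ Â`. A relation in `K ⊗ Â` involves finitely many elements, and a projective `P`
is a retract of a free module, whose finitely generated submodules lie in finite free summands;
so `K ⊗ Â → P ⊗ Â` is injective whenever `P/K` is `f`-power torsion. As `(A_f/A) ⊗ M` is
`f`-power torsion, this is the vanishing of `Tor₁(Â, (A_f/A) ⊗ M)` computed from a projective
presentation.
-/

open TensorProduct CategoryTheory CategoryTheory.Limits

universe u

lemma isZero_tor_one_of_lTensor_ker_injective {A : Type u} [CommRing A] (X Y : ModuleCat.{u} A)
    (h : ∀ (P : Type u) [AddCommGroup P] [Module A P] [Module.Projective A P] (g : P →ₗ[A] Y),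
      Function.Surjective g → Function.Injective ((LinearMap.ker g).subtype.lTensor X)) :
    IsZero (((Tor (ModuleCat.{u} A) 1).obj X).obj Y) := by
  let F := (MonoidalCategory.tensoringLeft (ModuleCat.{u} A)).obj X
  let R : ProjectiveResolution Y := (inferInstance : HasProjectiveResolution Y).out.some
  refine IsZero.of_iso ?_ (R.isoLeftDerivedObj F 1)
  let C := (F.mapHomologicalComplex (ComplexShape.down ℕ)).obj R.complex
  show IsZero (C.homology 1)
  rw [← HomologicalComplex.exactAt_iff_isZero_homology,
    HomologicalComplex.exactAt_iff' C 2 1 0 (by simp) (by simp), ShortComplex.moduleCat_exact_iff]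
  intro (x : X ⊗[A] R.complex.X 1) hx
  let d₂ : R.complex.X 2 →ₗ[A] R.complex.X 1 := (R.complex.d 2 1).hom
  let d₁ : R.complex.X 1 →ₗ[A] R.complex.X 0 := (R.complex.d 1 0).hom
  let π₀ : R.complex.X 0 →ₗ[A] Y := (R.π.f 0).hom
  have hrange₁ : LinearMap.range d₁ = LinearMap.ker π₀ :=
    (ShortComplex.moduleCat_exact_iff_range_eq_ker _).mp R.exact₀
  have hrange₂ : LinearMap.range d₂ = LinearMap.ker d₁ :=
    (ShortComplex.moduleCat_exact_iff_range_eq_ker _).mp (R.exact_succ 0)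
  let d₁' : R.complex.X 1 →ₗ[A] LinearMap.ker π₀ := d₁.codRestrict _ fun v => hrange₁ ▸ ⟨v, rfl⟩
  have hd₁' : Function.Surjective d₁' := by
    rintro ⟨k, hk⟩
    obtain ⟨v, rfl⟩ := hrange₁.ge hk
    exact ⟨v, rfl⟩
  have hexact : Function.Exact (d₂.lTensor X) (d₁'.lTensor X) := by
    refine lTensor_exact X (LinearMap.exact_iff.mpr ?_) hd₁'
    rw [LinearMap.ker_codRestrict, hrange₂]
  have : Module.Projective A (R.complex.X 0) := ModuleCat.projective_of_module_projective _
  have hπ₀ : Function.Surjective π₀ := (ModuleCat.epi_iff_surjective _).mp inferInstance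
  refine (hexact x).mp (h _ π₀ hπ₀ ?_)
  rw [map_zero, ← LinearMap.lTensor_comp_apply, LinearMap.subtype_comp_codRestrict]
  exact hx

variable {A : Type*} [CommRing A]

lemma LinearMap.rTensor_injective_of_comp_eq_id {R M N : Type*} (Q : Type*) [CommSemiring R]
    [AddCommMonoid M] [Module R M] [AddCommMonoid N] [Module R N] [AddCommMonoid Q] [Module R Q]
    {i : M →ₗ[R] N} {r : N →ₗ[R] M} (h : r ∘ₗ i = LinearMap.id) :
    Function.Injective (i.rTensor Q) :=
  Function.LeftInverse.injective (g := r.rTensor Q) fun x => by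
    rw [← LinearMap.rTensor_comp_apply, h, LinearMap.rTensor_id_apply]

lemma LinearMap.rTensor_subtype_injective_of_retract {R P F : Type*} (Q : Type*) [CommSemiring R]
    [AddCommMonoid P] [Module R P] [AddCommMonoid F] [Module R F] [AddCommMonoid Q] [Module R Q]
    {i : P →ₗ[R] F} {r : F →ₗ[R] P} (hri : r ∘ₗ i = LinearMap.id)
    {K : Submodule R P} {K' : Submodule R F} (hi : K ≤ K'.comap i) (hr : K' ≤ K.comap r)
    (h : Function.Injective (K'.subtype.rTensor Q)) :
    Function.Injective (K.subtype.rTensor Q) := by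
  have hK : r.restrict hr ∘ₗ i.restrict hi = LinearMap.id :=
    LinearMap.ext fun k => Subtype.ext (LinearMap.congr_fun hri k)
  have hsq : i ∘ₗ K.subtype = K'.subtype ∘ₗ i.restrict hi := rfl
  refine Function.Injective.of_comp (f := i.rTensor Q) ?_
  rw [← LinearMap.coe_comp, ← LinearMap.rTensor_comp, hsq, LinearMap.rTensor_comp,
    LinearMap.coe_comp]
  exact h.comp (rTensor_injective_of_comp_eq_id Q hK)

lemma Submodule.exists_forall_pow_smul_mem {R M : Type*} [CommSemiring R] [AddCommMonoid M]
    [Module R M] [Module.Finite R M] {r : R} {K : Submodule R M}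
    (hK : ∀ v : M, ∃ n : ℕ, r ^ n • v ∈ K) :
    ∃ n : ℕ, ∀ v : M, r ^ n • v ∈ K := by
  suffices ∀ (N : Submodule R M) (_ : N.FG), ∃ n : ℕ, ∀ v ∈ N, r ^ n • v ∈ K by
    simpa using this ⊤ Module.Finite.fg_top
  refine fun N hN => Submodule.fg_induction (motive := fun N _ => ∃ n : ℕ, ∀ v ∈ N, r ^ n • v ∈ K)
    (fun x => ?_) (fun N₁ N₂ _ _ h₁ h₂ => ?_) N hN
  · obtain ⟨n, hn⟩ := hK x
    refine ⟨n, fun v hv => ?_⟩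
    obtain ⟨a, rfl⟩ := Submodule.mem_span_singleton.mp hv
    rw [smul_comm]
    exact K.smul_mem a hn
  · obtain ⟨n₁, hn₁⟩ := h₁
    obtain ⟨n₂, hn₂⟩ := h₂
    refine ⟨n₁ + n₂, fun v hv => ?_⟩
    obtain ⟨v₁, hv₁, v₂, hv₂, rfl⟩ := Submodule.mem_sup.mp hv
    rw [smul_add, pow_add, mul_smul, mul_smul, smul_comm (r ^ n₁) (r ^ n₂) v₁]
    exact K.add_mem (K.smul_mem _ (hn₁ v₁ hv₁)) (K.smul_mem _ (hn₂ v₂ hv₂))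

lemma Submodule.FG.exists_le_finite_free_retract {R ι : Type*} [CommSemiring R]
    {J : Submodule R (ι →₀ R)} (hJ : J.FG) :
    ∃ F₀ : Submodule R (ι →₀ R), J ≤ F₀ ∧ Module.Finite R F₀ ∧ Module.Free R F₀ ∧
      ∃ r : (ι →₀ R) →ₗ[R] F₀, r ∘ₗ F₀.subtype = LinearMap.id := by
  classical
  obtain ⟨T, rfl⟩ := hJ
  let S : Set ι := T.biUnion Finsupp.support
  refine ⟨Finsupp.supported R R S, Submodule.span_le.mpr fun t ht => ?_,
    Module.Finite.equiv (Finsupp.supportedEquivFinsupp S).symm,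
    Module.Free.of_equiv (Finsupp.supportedEquivFinsupp S).symm,
    Finsupp.restrictDom R R S, Finsupp.restrictDom_comp_subtype S⟩
  rw [SetLike.mem_coe, Finsupp.mem_supported, Finset.coe_subset]
  exact Finset.subset_biUnion_of_mem _ ht

lemma Module.isTorsion'_tensorProduct {R M N : Type*} [CommSemiring R] [AddCommMonoid M]
    [Module R M] [AddCommMonoid N] [Module R N] {S : Submonoid R} (hM : Module.IsTorsion' M S) :
    Module.IsTorsion' (M ⊗[R] N) S := by
  rw [Submodule.isTorsion'_iff_torsion'_eq_top (R := R), eq_top_iff,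
    ← TensorProduct.span_tmul_eq_top, Submodule.span_le]
  rintro _ ⟨m, n, rfl⟩
  obtain ⟨a, ha⟩ := @hM m
  rw [Submonoid.smul_def] at ha
  exact ⟨a, by rw [Submonoid.smul_def, smul_tmul', ha, zero_tmul]⟩

lemma IsLocalization.isTorsion'_quotient_range {S : Submonoid A} (B : Type*) [CommRing B]
    [Algebra A B] [IsLocalization S B] :
    Module.IsTorsion' (B ⧸ LinearMap.range (Algebra.linearMap A B)) S := by
  rintro ⟨b⟩
  obtain ⟨⟨a, s⟩, rfl⟩ := IsLocalization.mk'_surjective S b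
  refine ⟨s, (Submodule.Quotient.mk_eq_zero _).mpr ⟨a, ?_⟩⟩
  show algebraMap A B a = (s : A) • IsLocalization.mk' B a s
  rw [Algebra.smul_def, IsLocalization.mk'_spec']

namespace AdicCompletion

lemma mem_span_singleton_pow_smul_top_iff (f : A) (n : ℕ) (a : A) :
    a ∈ (Ideal.span {f} ^ n • ⊤ : Submodule A A) ↔ f ^ n ∣ a := by
  rw [Ideal.smul_eq_mul, Ideal.mul_top, Ideal.span_singleton_pow, Ideal.mem_span_singleton]

variable {f : A}

local notation "Â" => AdicCompletion (Ideal.span (Singleton.singleton f)) A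

lemma exists_pow_smul_eq_of_val_eq_zero {n : ℕ} {x : Â} (hx : x.val n = 0) :
    ∃ z : Â, f ^ n • z = x := by
  have hmem : x ∈ (Ideal.span {f} ^ n • ⊤ : Submodule A Â) := by
    rw [pow_smul_top_eq_ker_eval (Submodule.fg_span_singleton f)]
    exact hx
  rw [Ideal.span_singleton_pow, Submodule.ideal_span_singleton_smul,
    Submodule.mem_smul_pointwise_iff_exists] at hmem
  obtain ⟨z, -, hz⟩ := hmem
  exact ⟨z, hz⟩

lemma isSMulRegular_of_mem_nonZeroDivisors (hf : f ∈ nonZeroDivisors A) :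
    IsSMulRegular Â f := by
  refine IsSMulRegular.of_right_eq_zero_of_smul fun x hx => ext fun m => ?_
  obtain ⟨a, ha⟩ := Submodule.Quotient.mk_surjective _ (x.val (m + 1))
  obtain ⟨c, hc⟩ : f ^ (m + 1) ∣ f * a := by
    rw [← mem_span_singleton_pow_smul_top_iff, ← Submodule.Quotient.mk_eq_zero, ← smul_eq_mul,
      Submodule.Quotient.mk_smul, ha, ← val_smul_apply, hx, val_zero_apply]
  have hac : a = f ^ m * c :=
    (mul_cancel_left_mem_nonZeroDivisors hf).mp (by rw [hc, pow_succ', mul_assoc])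
  rw [val_zero_apply, ← x.property (Nat.le_succ m), ← ha]
  exact (Submodule.Quotient.mk_eq_zero _).mpr
    ((mem_span_singleton_pow_smul_top_iff f m a).mpr ⟨c, hac⟩)

section Torsion

variable {N N' : Type*} [AddCommGroup N] [Module A N] [AddCommGroup N'] [Module A N'] {n : ℕ}

lemma bijective_tmul_one (hN : Module.IsTorsionBy A N (f ^ n)) :
    Function.Bijective ((TensorProduct.mk A N Â).flip 1) := by
  constructor
  · have hker :
        (Ideal.span {f} ^ n • ⊤ : Submodule A A) ≤ LinearMap.ker (LinearMap.lsmul A N) := by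
      intro a ha
      obtain ⟨c, rfl⟩ := (mem_span_singleton_pow_smul_top_iff f n a).mp ha
      ext y
      simp [mul_comm, mul_smul, hN]
    let ψ : N ⊗[A] Â →ₗ[A] N :=
      TensorProduct.lift ((Submodule.liftQ _ _ hker ∘ₗ eval _ A n).flip)
    refine Function.LeftInverse.injective (g := ψ) fun y => ?_
    simp only [ψ, LinearMap.flip_apply, mk_apply, lift.tmul, LinearMap.coe_comp,
      Function.comp_apply, eval_apply, val_one]
    exact one_smul A y
  · rw [← LinearMap.range_eq_top, eq_top_iff, ← TensorProduct.span_tmul_eq_top, Submodule.span_le]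
    rintro _ ⟨y, x, rfl⟩
    obtain ⟨a, ha⟩ := Submodule.Quotient.mk_surjective _ (x.val n)
    have hval : (x - a • 1 : Â).val n = 0 := by
      rw [val_sub_apply, val_smul_apply, val_one, ← ha, sub_eq_zero]
      exact congrArg _ (mul_one a).symm
    obtain ⟨z, hz⟩ := exists_pow_smul_eq_of_val_eq_zero hval
    refine ⟨a • y, ?_⟩
    show (a • y) ⊗ₜ[A] (1 : Â) = y ⊗ₜ[A] x
    calc (a • y) ⊗ₜ[A] (1 : Â) = y ⊗ₜ[A] (a • 1 : Â) := smul_tmul _ _ _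
      _ = y ⊗ₜ[A] (a • 1 : Â) + (f ^ n • y) ⊗ₜ[A] z := by
          rw [hN, zero_tmul, add_zero]
      _ = y ⊗ₜ[A] x := by rw [smul_tmul (f ^ n) y z, ← tmul_add, hz, add_sub_cancel]

lemma rTensor_injective_of_isTorsionBy (hN : Module.IsTorsionBy A N (f ^ n))
    (hN' : Module.IsTorsionBy A N' (f ^ n)) {g : N →ₗ[A] N'} (hg : Function.Injective g) :
    Function.Injective (g.rTensor Â) := by
  have hcomm : g.rTensor Â ∘ (TensorProduct.mk A N Â).flip 1 =
      (TensorProduct.mk A N' Â).flip 1 ∘ g := rfl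
  refine Function.Injective.of_comp_right ?_ (bijective_tmul_one hN).2
  rw [hcomm]
  exact (bijective_tmul_one hN').1.comp hg

end Torsion

variable {F : Type*} [AddCommGroup F] [Module A F]

lemma isSMulRegular_tensorProduct_of_flat [Module.Flat A F] (hf : f ∈ nonZeroDivisors A)
    (n : ℕ) :
    IsSMulRegular (F ⊗[A] Â) (f ^ n) := by
  have h := Module.Flat.lTensor_preserves_injective_linearMap (M := F)
    (DistribSMul.toLinearMap A Â (f ^ n))
    ((isSMulRegular_of_mem_nonZeroDivisors hf).pow n)
  rwa [LinearMap.lTensor_smul_action] at h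

lemma rTensor_subtype_injective_of_pow_smul_mem [Module.Flat A F] (hf : f ∈ nonZeroDivisors A)
    {n : ℕ} {L : Submodule A F} (hL : ∀ v, f ^ n • v ∈ L) :
    Function.Injective (L.subtype.rTensor Â) := by
  let μ := DistribSMul.toLinearMap A F (f ^ n)
  let θ : F →ₗ[A] L := μ.codRestrict L hL
  have hθμ : LinearMap.range θ ≤ (LinearMap.range μ).comap L.subtype := by
    rintro _ ⟨v, rfl⟩
    exact ⟨v, rfl⟩
  have hι : Function.Injective ((LinearMap.range θ).mapQ _ L.subtype hθμ) := by
    rw [← LinearMap.ker_eq_bot]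
    refine Submodule.ker_liftQ_eq_bot _ _ _ fun l hl => ?_
    obtain ⟨v, hv⟩ := (Submodule.Quotient.mk_eq_zero _).mp hl
    exact ⟨v, Subtype.ext hv⟩
  have htors : Module.IsTorsionBy A (L ⧸ LinearMap.range θ) (f ^ n) := by
    rintro ⟨l⟩
    exact (Submodule.Quotient.mk_eq_zero _).mpr ⟨l, rfl⟩
  have htors' : Module.IsTorsionBy A (F ⧸ LinearMap.range μ) (f ^ n) := by
    rintro ⟨v⟩
    exact (Submodule.Quotient.mk_eq_zero _).mpr ⟨v, rfl⟩
  have hexact : Function.Exact (θ.rTensor Â) ((LinearMap.range θ).mkQ.rTensor Â) :=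
    rTensor_exact Â (LinearMap.exact_iff.mpr (Submodule.ker_mkQ _)) (Submodule.mkQ_surjective _)
  rw [injective_iff_map_eq_zero]
  intro x hx
  have hx' : (LinearMap.range θ).mkQ.rTensor Â x = 0 := by
    apply rTensor_injective_of_isTorsionBy htors htors' hι
    rw [← LinearMap.rTensor_comp_apply, Submodule.mapQ_mkQ, LinearMap.rTensor_comp_apply, hx,
      _root_.map_zero, _root_.map_zero]
  obtain ⟨w, rfl⟩ := (hexact x).mp hx'
  have hw : f ^ n • w = 0 := by
    have hθ : L.subtype ∘ₗ θ = μ := LinearMap.subtype_comp_codRestrict _ _ _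
    rw [← hx, ← LinearMap.rTensor_comp_apply, hθ, LinearMap.rTensor_smul_action]
    rfl
  rw [(isSMulRegular_tensorProduct_of_flat hf n).right_eq_zero_of_smul hw, _root_.map_zero]

lemma rTensor_subtype_injective_of_finsupp (hf : f ∈ nonZeroDivisors A) {ι : Type*}
    {K : Submodule A (ι →₀ A)} (hK : ∀ v, ∃ n : ℕ, f ^ n • v ∈ K) :
    Function.Injective (K.subtype.rTensor Â) := by
  intro x₁ x₂ hx
  obtain ⟨J, hJ, hJK, hsub⟩ :=
    Submodule.exists_fg_le_subset_range_rTensor_inclusion {x₁, x₂} (Set.toFinite _)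
  obtain ⟨y₁, rfl⟩ := hsub (.inl rfl)
  obtain ⟨y₂, rfl⟩ := hsub (.inr rfl)
  obtain ⟨F₀, hJF₀, _, _, r, hr⟩ := hJ.exists_le_finite_free_retract
  let L : Submodule A F₀ := K.comap F₀.subtype
  obtain ⟨n, hn⟩ := Submodule.exists_forall_pow_smul_mem (M := F₀) (K := L) fun v => hK v
  let toL : J →ₗ[A] L := (Submodule.inclusion hJF₀).codRestrict L fun j => hJK j.2
  let toK : L →ₗ[A] K := F₀.subtype.restrict fun _ hv => hv
  have hL : Function.Injective (L.subtype.rTensor Â) :=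
    rTensor_subtype_injective_of_pow_smul_mem (F := F₀) hf hn
  have key : toL.rTensor Â y₁ = toL.rTensor Â y₂ := by
    apply hL
    refine LinearMap.rTensor_injective_of_comp_eq_id Â hr ?_
    have hcomp : (F₀.subtype ∘ₗ L.subtype) ∘ₗ toL = K.subtype ∘ₗ Submodule.inclusion hJK := rfl
    rw [← LinearMap.rTensor_comp_apply, ← LinearMap.rTensor_comp_apply,
      ← LinearMap.rTensor_comp_apply, ← LinearMap.rTensor_comp_apply, hcomp,
      LinearMap.rTensor_comp_apply, LinearMap.rTensor_comp_apply, hx]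
  have hJK' : Submodule.inclusion hJK = toK ∘ₗ toL := rfl
  rw [hJK', LinearMap.rTensor_comp_apply, LinearMap.rTensor_comp_apply, key]

lemma rTensor_subtype_injective_of_projective (hf : f ∈ nonZeroDivisors A) {P : Type*}
    [AddCommGroup P] [Module A P] [Module.Projective A P] {K : Submodule A P}
    (hK : ∀ v, ∃ n : ℕ, f ^ n • v ∈ K) :
    Function.Injective (K.subtype.rTensor Â) := by
  obtain ⟨s, hs⟩ := Module.projective_def'.mp ‹Module.Projective A P›
  refine LinearMap.rTensor_subtype_injective_of_retract Â hs (K' := K.comap _)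
    (fun k hk => ?_) le_rfl (rTensor_subtype_injective_of_finsupp hf fun v => ?_)
  · rw [Submodule.mem_comap, Submodule.mem_comap, ← LinearMap.comp_apply, hs]
    exact hk
  · obtain ⟨n, hn⟩ := hK (Finsupp.linearCombination A id v)
    exact ⟨n, by rwa [Submodule.mem_comap, map_smul]⟩

end AdicCompletion

theorem stmt_14 {A : Type} [CommRing A] (f : A) (hf : f ∈ nonZeroDivisors A)
    (M : Type) [AddCommGroup M] [Module A M] :
    IsZero
      (((Tor (ModuleCat.{0} A) 1).obj
          (ModuleCat.of A (AdicCompletion (Ideal.span {f}) A))).obj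
        (ModuleCat.of A
          ((Localization (Submonoid.powers f) ⧸
              LinearMap.range
                (Algebra.linearMap A (Localization (Submonoid.powers f)))) ⊗[A] M))) := by
  have htors := (Submodule.isTorsion'_powers_iff f).mp
    (Module.isTorsion'_tensorProduct (N := M)
      (IsLocalization.isTorsion'_quotient_range (Localization (Submonoid.powers f))))
  refine isZero_tor_one_of_lTensor_ker_injective _ _ fun P _ _ _ g _ => ?_
  rw [LinearMap.lTensor_inj_iff_rTensor_inj]
  refine AdicCompletion.rTensor_subtype_injective_of_projective hf fun v => ?_
  obtain ⟨n, hn⟩ := htors (g v)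
  exact ⟨n, by rw [LinearMap.mem_ker, map_smul, hn]⟩
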